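/- Let a(n) be the number of even Motzkin paths and b(n) the number of odd Motzkin paths of length n. Then a and b satisfy, for n ≥ 0: a(n+1) = a(n) + 2·Σ_{k=0}^{n-1} a(k)·b(n-1-k) and b(n+1) = b(n) + Σ_{k=0}^{n-1} (a(k)·a(n-1-k) + b(k)·b(n-1-k)), with a(0)=1, b(0)=0. -/

import Mathlib

inductive MStep where
  | U : MStep
  | D : MStep
  | H : MStep
deriving DecidableEq

/-- A word in {U,D,H} is a Motzkin path if #U = #D and no prefix has more D's than U's. -/
def IsMotzkin (w : List MStep) : Prop :=
  w.count MStep.U = w.count MStep.D ∧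
  ∀ p : List MStep, p <+: w → p.count MStep.D ≤ p.count MStep.U

/-- Number of Motzkin paths of length n (the n-th Motzkin number). -/
noncomputable def motzkinNum (n : ℕ) : ℕ :=
  Nat.card {w : List MStep // w.length = n ∧ IsMotzkin w}

/-- Number of Motzkin paths of length n with an even number of U steps. -/
noncomputable def evenMotzkin (n : ℕ) : ℕ :=
  Nat.card {w : List MStep // w.length = n ∧ IsMotzkin w ∧ Even (w.count MStep.U)}

/-- Number of Motzkin paths of length n with an odd number of U steps. -/
noncomputable def oddMotzkin (n : ℕ) : ℕ :=
  Nat.card {w : List MStep // w.length = n ∧ IsMotzkin w ∧ Odd (w.count MStep.U)}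

/-- The shadow of the n-th Motzkin number: s(n) = a(n) - b(n). -/
noncomputable def shadow (n : ℕ) : ℤ :=
  (evenMotzkin n : ℤ) - (oddMotzkin n : ℤ)


/-!
A nonempty Motzkin path is either `H w` or, cutting at its first return to height `0`,
`U w₁ D w₂`, with `w`, `w₁`, `w₂` Motzkin paths determined by it. The second form has one more
`U` step than `w₁` and `w₂` together, so indexing paths by the parity of their `U` steps in
`ZMod 2` yields both recurrences from one count. For even paths the two mixed terms `a k · b j`
and `b k · a j` are the same sum read backwards, whence the factor `2`.
-/

open MStep

theorem List.IsPrefix.append_cases {α : Type*} {p l₁ l₂ : List α} (h : p <+: l₁ ++ l₂) :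
    p <+: l₁ ∨ ∃ q, p = l₁ ++ q ∧ q <+: l₂ := by
  rcases le_or_gt p.length l₁.length with hl | hl
  · exact Or.inl (List.prefix_of_prefix_length_le h (l₁.prefix_append l₂) hl)
  obtain ⟨q, rfl⟩ := List.prefix_of_prefix_length_le (l₁.prefix_append l₂) h hl.le
  exact Or.inr ⟨q, rfl, (List.prefix_append_right_inj l₁).mp h⟩

theorem Finset.sum_range_mul_reflect {R : Type*} [CommSemiring R] (f g : ℕ → R) (n : ℕ) :
    ∑ k ∈ Finset.range n, f k * g (n - 1 - k) = ∑ k ∈ Finset.range n, g k * f (n - 1 - k) := by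
  rw [← Finset.sum_range_reflect]
  refine Finset.sum_congr rfl fun k hk => ?_
  rw [Finset.mem_range] at hk
  rw [Nat.sub_sub_self (by omega), mul_comm]

theorem ZMod.sum_univ_two {M : Type*} [AddCommMonoid M] (f : ZMod 2 → M) :
    ∑ e, f e = f 0 + f 1 :=
  Fin.sum_univ_two f

namespace IsMotzkin

theorem nil : IsMotzkin [] :=
  ⟨rfl, fun p hp => by simp [List.prefix_nil.mp hp]⟩

theorem H_cons_iff {w : List MStep} : IsMotzkin (H :: w) ↔ IsMotzkin w := by
  constructor
  · rintro ⟨hbal, hpre⟩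
    refine ⟨by simpa using hbal, fun p hp => ?_⟩
    simpa using hpre (H :: p) (List.cons_prefix_cons.mpr ⟨rfl, hp⟩)
  · rintro ⟨hbal, hpre⟩
    refine ⟨by simpa using hbal, fun p hp => ?_⟩
    rcases List.prefix_cons_iff.mp hp with rfl | ⟨q, rfl, hq⟩
    · simp
    · simpa using hpre q hq

theorem not_D_cons (w : List MStep) : ¬ IsMotzkin (D :: w) := fun h => by
  simpa using h.2 [D] ⟨w, rfl⟩

theorem U_cons_append_D_cons {w₁ w₂ : List MStep} (h₁ : IsMotzkin w₁) (h₂ : IsMotzkin w₂) :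
    IsMotzkin (U :: w₁ ++ D :: w₂) := by
  obtain ⟨hbal₁, hpre₁⟩ := h₁
  obtain ⟨hbal₂, hpre₂⟩ := h₂
  refine ⟨by simp; omega, fun p hp => ?_⟩
  rcases List.prefix_cons_iff.mp hp with rfl | ⟨t, rfl, ht⟩
  · simp
  rcases ht.append_cases with ht₁ | ⟨q, rfl, hq⟩
  · have := hpre₁ t ht₁
    simp; omega
  rcases List.prefix_cons_iff.mp hq with rfl | ⟨r, rfl, hr⟩
  · simp; omega
  · have := hpre₂ r hr
    simp; omega

/-- A word started at height `c` that dips below `0` does so first by a `D` step taken at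
height `0`. -/
theorem exists_first_descent (c : ℕ) (t : List MStep)
    (h : ∃ p, p <+: t ∧ c + p.count U < p.count D) :
    ∃ w₁ w₂, t = w₁ ++ D :: w₂ ∧ w₁.count D = c + w₁.count U ∧
      ∀ p, p <+: w₁ → p.count D ≤ c + p.count U := by
  induction t generalizing c with
  | nil =>
    obtain ⟨p, hp, hlt⟩ := h
    simp [List.prefix_nil.mp hp] at hlt
  | cons s t ih =>
    by_cases hstop : s = D ∧ c = 0
    · obtain ⟨rfl, rfl⟩ := hstop
      exact ⟨[], t, rfl, rfl, fun q hq => by simp [List.prefix_nil.mp hq]⟩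
    obtain ⟨p, hp, hlt⟩ := h
    rcases List.prefix_cons_iff.mp hp with rfl | ⟨p, rfl, hp'⟩
    · simp at hlt
    obtain ⟨c', hc⟩ : ∃ c', c' + [s].count D = c + [s].count U :=
      ⟨c + [s].count U - [s].count D, by cases s <;> simp at hstop ⊢; omega⟩
    simp only [List.count_cons, List.count_nil] at hc hlt
    obtain ⟨w₁, w₂, rfl, hbal, hpre⟩ := ih c' ⟨p, hp', by omega⟩
    refine ⟨s :: w₁, w₂, rfl, ?_, fun q hq => ?_⟩
    · simp only [List.count_cons]; omega
    rcases List.prefix_cons_iff.mp hq with rfl | ⟨q, rfl, hq'⟩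
    · simp
    · have := hpre q hq'
      simp only [List.count_cons]; omega

theorem exists_of_U_cons {t : List MStep} (h : IsMotzkin (U :: t)) :
    ∃ w₁ w₂, t = w₁ ++ D :: w₂ ∧ IsMotzkin w₁ ∧ IsMotzkin w₂ := by
  obtain ⟨hbal, hpre⟩ := h
  obtain ⟨w₁, w₂, rfl, hbal₁, hpre₁⟩ :=
    exists_first_descent 0 t ⟨t, List.prefix_rfl, by simp at hbal; omega⟩
  refine ⟨w₁, w₂, rfl, ⟨by omega, by simpa using hpre₁⟩, by simp at hbal; omega, fun q hq => ?_⟩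
  have := hpre (U :: w₁ ++ D :: q) <| List.cons_prefix_cons.mpr
    ⟨rfl, (List.prefix_append_right_inj w₁).mpr (List.cons_prefix_cons.mpr ⟨rfl, hq⟩)⟩
  simp at this; omega

theorem not_append_D_prefix {w w' : List MStep} (h : IsMotzkin w) (h' : IsMotzkin w') :
    ¬ w ++ [D] <+: w' := fun hp => by
  have hle := h'.2 _ hp
  have hbal := h.1
  simp at hle; omega

theorem append_D_cons_inj {w₁ w₂ w₁' w₂' : List MStep} (h₁ : IsMotzkin w₁)
    (h₁' : IsMotzkin w₁') (he : w₁ ++ D :: w₂ = w₁' ++ D :: w₂') : w₁ = w₁' ∧ w₂ = w₂' := by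
  have shorter : ∀ {a b a' b' : List MStep}, a ++ D :: b = a' ++ D :: b' → IsMotzkin a →
      IsMotzkin a' → ¬ a.length < a'.length := by
    intro a b a' b' he h h' hlt
    exact not_append_D_prefix h h' <|
      List.prefix_of_prefix_length_le (l₃ := a ++ D :: b) ⟨b, by simp⟩
        (he ▸ List.prefix_append _ _) (by simpa using hlt)
  have hlen : w₁.length = w₁'.length :=
    le_antisymm (not_lt.mp (shorter he.symm h₁' h₁)) (not_lt.mp (shorter he h₁ h₁'))
  obtain ⟨rfl, hD⟩ := List.append_inj he hlen
  exact ⟨rfl, List.cons_injective.eq_iff.mp hD⟩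

end IsMotzkin

instance : Finite MStep :=
  Finite.of_surjective ![U, D, H] fun | U => ⟨0, rfl⟩ | D => ⟨1, rfl⟩ | H => ⟨2, rfl⟩

def MotzkinPath (n : ℕ) (e : ZMod 2) : Type :=
  {w : List MStep // w.length = n ∧ IsMotzkin w ∧ (w.count U : ZMod 2) = e}

namespace MotzkinPath

instance (n : ℕ) (e : ZMod 2) : Finite (MotzkinPath n e) :=
  ((List.finite_length_eq MStep n).subset fun _ hw => hw.1).to_subtype

/-- The nonempty terms of `A = λ + HA + UADB + UBDA` and `B = HB + UADA + UBDB`, with `e₁` the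
parity of the factor between `U` and `D`. -/
def assemble (n : ℕ) (e : ZMod 2) :
    MotzkinPath n e ⊕ (Σ k : Fin n, Σ e₁ : ZMod 2,
      MotzkinPath k e₁ × MotzkinPath (n - 1 - k) (e - 1 - e₁)) → MotzkinPath (n + 1) e
  | .inl w =>
    ⟨H :: w.1, by simpa using w.2.1, IsMotzkin.H_cons_iff.mpr w.2.2.1, by simpa using w.2.2.2⟩
  | .inr ⟨k, e₁, w₁, w₂⟩ =>
    ⟨U :: w₁.1 ++ D :: w₂.1, by simp [w₁.2.1, w₂.2.1]; omega,
      w₁.2.2.1.U_cons_append_D_cons w₂.2.2.1, by simp [w₁.2.2.2, w₂.2.2.2]⟩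

theorem assemble_injective (n : ℕ) (e : ZMod 2) : Function.Injective (assemble n e) := by
  rintro (⟨w, _⟩ | ⟨k, e₁, ⟨w₁, hl₁, hm₁, hp₁⟩, ⟨w₂, _⟩⟩)
    (⟨w', _⟩ | ⟨k', e₁', ⟨w₁', hl₁', hm₁', hp₁'⟩, ⟨w₂', _⟩⟩) h <;>
    replace h := congrArg Subtype.val h <;>
    simp only [assemble, List.cons_append, List.cons.injEq, reduceCtorEq, false_and,
      true_and] at h
  · subst h; rfl
  · obtain ⟨rfl, rfl⟩ := IsMotzkin.append_D_cons_inj hm₁ hm₁' h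
    obtain rfl : k = k' := Fin.ext (hl₁.symm.trans hl₁')
    obtain rfl : e₁ = e₁' := hp₁.symm.trans hp₁'
    rfl

theorem assemble_surjective (n : ℕ) (e : ZMod 2) : Function.Surjective (assemble n e) := by
  rintro ⟨_ | ⟨s, t⟩, hl, hm, hp⟩
  · simp at hl
  cases s with
  | H =>
    exact ⟨.inl ⟨t, by simpa using hl, IsMotzkin.H_cons_iff.mp hm, by simpa using hp⟩, rfl⟩
  | D => exact (IsMotzkin.not_D_cons t hm).elim
  | U =>
    obtain ⟨w₁, w₂, rfl, hm₁, hm₂⟩ := hm.exists_of_U_cons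
    simp at hl
    refine ⟨.inr ⟨⟨w₁.length, by omega⟩, w₁.count U, ⟨w₁, rfl, hm₁, rfl⟩,
      ⟨w₂, by simp; omega, hm₂, ?_⟩⟩, rfl⟩
    rw [← hp]
    simp

theorem card_succ (n : ℕ) (e : ZMod 2) :
    Nat.card (MotzkinPath (n + 1) e) = Nat.card (MotzkinPath n e) +
      ∑ k ∈ Finset.range n, ∑ e₁ : ZMod 2,
        Nat.card (MotzkinPath k e₁) * Nat.card (MotzkinPath (n - 1 - k) (e - 1 - e₁)) := by
  rw [← Nat.card_eq_of_bijective _ ⟨assemble_injective n e, assemble_surjective n e⟩,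
    Nat.card_sum, Nat.card_sigma, ← Fin.sum_univ_eq_sum_range]
  simp only [Nat.card_sigma, Nat.card_prod]

theorem card_zero_zero : Nat.card (MotzkinPath 0 0) = 1 :=
  Nat.card_eq_one_iff_exists.mpr ⟨⟨[], rfl, IsMotzkin.nil, by simp⟩,
    fun ⟨w, hl, _⟩ => Subtype.ext (List.length_eq_zero_iff.mp hl)⟩

theorem card_zero_one : Nat.card (MotzkinPath 0 1) = 0 := by
  have : IsEmpty (MotzkinPath 0 1) := ⟨fun ⟨w, hl, _, hp⟩ => by
    simp [List.length_eq_zero_iff.mp hl] at hp⟩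
  exact Nat.card_of_isEmpty

end MotzkinPath

theorem evenMotzkin_eq_card (n : ℕ) : evenMotzkin n = Nat.card (MotzkinPath n 0) :=
  Nat.card_congr <| Equiv.subtypeEquivRight fun w => by
    rw [← ZMod.natCast_eq_zero_iff_even]

theorem oddMotzkin_eq_card (n : ℕ) : oddMotzkin n = Nat.card (MotzkinPath n 1) :=
  Nat.card_congr <| Equiv.subtypeEquivRight fun w => by
    rw [← ZMod.natCast_eq_one_iff_odd]

theorem evenMotzkin_zero : evenMotzkin 0 = 1 :=
  (evenMotzkin_eq_card 0).trans MotzkinPath.card_zero_zero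

theorem oddMotzkin_zero : oddMotzkin 0 = 0 :=
  (oddMotzkin_eq_card 0).trans MotzkinPath.card_zero_one

theorem evenMotzkin_succ (n : ℕ) :
    evenMotzkin (n + 1) =
      evenMotzkin n + 2 * ∑ k ∈ Finset.range n, evenMotzkin k * oddMotzkin (n - 1 - k) := by
  have h₀ : (0 : ZMod 2) - 1 - 0 = 1 := rfl
  have h₁ : (0 : ZMod 2) - 1 - 1 = 0 := rfl
  simp only [evenMotzkin_eq_card, oddMotzkin_eq_card, MotzkinPath.card_succ, ZMod.sum_univ_two,
    h₀, h₁, Finset.sum_add_distrib, two_mul]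
  rw [Finset.sum_range_mul_reflect (fun k => Nat.card (MotzkinPath k 1))
    (fun k => Nat.card (MotzkinPath k 0))]

theorem oddMotzkin_succ (n : ℕ) :
    oddMotzkin (n + 1) =
      oddMotzkin n + ∑ k ∈ Finset.range n,
        (evenMotzkin k * evenMotzkin (n - 1 - k) + oddMotzkin k * oddMotzkin (n - 1 - k)) := by
  have h₀ : (1 : ZMod 2) - 1 - 0 = 0 := rfl
  have h₁ : (1 : ZMod 2) - 1 - 1 = 1 := rfl
  simp only [evenMotzkin_eq_card, oddMotzkin_eq_card, MotzkinPath.card_succ, ZMod.sum_univ_two,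
    h₀, h₁]

theorem stmt_9 :
    evenMotzkin 0 = 1 ∧ oddMotzkin 0 = 0 ∧
    ∀ n : ℕ,
      evenMotzkin (n + 1) =
        evenMotzkin n + 2 * ∑ k ∈ Finset.range n, evenMotzkin k * oddMotzkin (n - 1 - k) ∧
      oddMotzkin (n + 1) =
        oddMotzkin n + ∑ k ∈ Finset.range n,
          (evenMotzkin k * evenMotzkin (n - 1 - k) + oddMotzkin k * oddMotzkin (n - 1 - k)) := by
  exact ⟨evenMotzkin_zero, oddMotzkin_zero, fun n => ⟨evenMotzkin_succ n, oddMotzkin_succ n⟩⟩
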